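/- Let k ≥ 2 be an integer and let Q = [a,b,c] be a positive definite integral binary quadratic form of discriminant −D (D > 0, a > 0, b² − 4ac = −D), with CM-point τ_Q := (−b + i√D)/(2a) and v_Q := √D/(2a). Let O(Q) ⊆ ℤ³ be the SL₂(ℤ)-orbit of Q under (Q∘M)(x,y) := Q(αx+βy, γx+δy), and set ω := (1/2)·#{M ∈ SL₂(ℤ) : M·τ_Q = τ_Q}. Then for every z in the upper half-plane not lying in the SL₂(ℤ)-orbit of τ_Q, D^{k/2} · ∑_{𝒬 ∈ O(Q)} 𝒬(z,1)^{−k} = ((2 v_Q)^k / (2ω)) · ∑_{M = [[α,β],[γ,δ]] ∈ SL₂(ℤ)} (γz+δ)^{−2k} · (M·z − conj(τ_Q))^{−2k} · X_{τ_Q}(M·z)^{−k}, both series converging absolutely (as tsums over O(Q) and over SL₂(ℤ) respectively). Here 𝒬(z,1) := a'z² + b'z + c' for 𝒬 = [a',b',c'], M·z = (αz+β)/(γz+δ), and X_ϱ(w) := (w − ϱ)/(w − conj(ϱ)). -/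

import Mathlib

/-- The Möbius action of `M = [[α,β],[γ,δ]] ∈ SL₂(ℤ)` on a complex number `z`,
`M·z = (αz+β)/(γz+δ)`. -/
noncomputable def moebius (g : Matrix.SpecialLinearGroup (Fin 2) ℤ) (z : ℂ) : ℂ :=
  (((g.1 0 0 : ℤ) : ℂ) * z + ((g.1 0 1 : ℤ) : ℂ)) / (((g.1 1 0 : ℤ) : ℂ) * z + ((g.1 1 1 : ℤ) : ℂ))

/-- The automorphy factor `γz + δ` for `M = [[α,β],[γ,δ]] ∈ SL₂(ℤ)`. -/
noncomputable def denomSL (g : Matrix.SpecialLinearGroup (Fin 2) ℤ) (z : ℂ) : ℂ :=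
  ((g.1 1 0 : ℤ) : ℂ) * z + ((g.1 1 1 : ℤ) : ℂ)

/-- The action of `M = [[α,β],[γ,δ]] ∈ SL₂(ℤ)` on (coefficient triples of) integral binary
quadratic forms, `(Q∘M)(x,y) = Q(αx+βy, γx+δy)`. -/
def formAct (q : ℤ × ℤ × ℤ) (g : Matrix.SpecialLinearGroup (Fin 2) ℤ) : ℤ × ℤ × ℤ :=
  (q.1 * (g.1 0 0) ^ 2 + q.2.1 * (g.1 0 0) * (g.1 1 0) + q.2.2 * (g.1 1 0) ^ 2,
   2 * q.1 * (g.1 0 0) * (g.1 0 1) + q.2.1 * ((g.1 0 0) * (g.1 1 1) + (g.1 0 1) * (g.1 1 0))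
     + 2 * q.2.2 * (g.1 1 0) * (g.1 1 1),
   q.1 * (g.1 0 1) ^ 2 + q.2.1 * (g.1 0 1) * (g.1 1 1) + q.2.2 * (g.1 1 1) ^ 2)

/-!
If `τ` is the CM point of `Q = [a,b,c]`, then `Q(w,1) = a (w - τ)(w - τ̄)`, and
`(Q∘M)(z,1) = (γz+δ)² Q(M·z, 1)`. Hence the `M`-th term of the Poincaré series is
`a^k (Q∘M)(z,1)^{-k}`, and summing over `SL₂(ℤ)` counts every form of the orbit `O(Q)` once for
each element of the stabilizer of `Q`. That stabilizer is the stabilizer of `τ` (a form of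
discriminant `-D` with positive leading coefficient is determined by its CM point), which is
finite because `SL₂(ℤ)` acts properly discontinuously on `ℍ`; it has `2ω` elements, and
`(2v_Q)^k/(2ω) · a^k · 2ω = D^{k/2}`.

For absolute convergence, `|(Q∘M)(z,1)| ≥ a |γz+δ|² |M·z - τ|²`. For all but finitely many `M`
the point `M·z` lies either below height `Im τ / 2` or at horizontal distance at least `1` from
`τ`, and then `|M·z - τ| ≫ |m + 1/2|` with `m = ⌊Re (M·z - τ)⌋`. As `M` is determined by its
bottom row `(γ, δ)` and by `m` (matrices with the same bottom row differ by a power of `T` on the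
left), the series is dominated by the product of `∑ |γz+δ|^{-2k}` and `∑ |m + 1/2|^{-2k}`.
-/

open UpperHalfPlane ModularGroup Filter
open scoped MatrixGroups ComplexConjugate

lemma Summable.of_comp_surjective {β γ E : Type*} [AddCommGroup E] [UniformSpace E]
    [IsUniformAddGroup E] [CompleteSpace E] {π : γ → β} (hπ : Function.Surjective π)
    {f : β → E} (hf : Summable (f ∘ π)) : Summable f := by
  obtain ⟨σ, hσ⟩ := hπ.hasRightInverse
  simpa [Function.comp_def, hσ _] using hf.comp_injective hσ.injective

lemma tsum_comp_eq_card_mul_tsum {𝕜 β γ : Type*} [NormedField 𝕜] [CompleteSpace 𝕜]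
    (π : γ → β) {N : ℕ} (hcard : ∀ b, Nat.card {g // π g = b} = N) {v : β → 𝕜}
    (hsum : Summable (v ∘ π)) : ∑' g, v (π g) = N * ∑' b, v b := by
  have hsum' : Summable fun p => v (π (Equiv.sigmaFiberEquiv π p)) :=
    (Equiv.sigmaFiberEquiv π).summable_iff.mpr hsum
  rw [← (Equiv.sigmaFiberEquiv π).tsum_eq, hsum'.tsum_sigma, ← tsum_mul_left]
  refine tsum_congr fun b => ?_
  simp only [Equiv.sigmaFiberEquiv_apply]
  rw [tsum_congr fun g : {g // π g = b} => congrArg v g.2, tsum_const, hcard, nsmul_eq_mul]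

-- At `u = 0` both sides are `0`, since `0⁻¹ = 0` in `K`.
lemma zpow_mul_zpow_mul_div_zpow_eq {K : Type*} [Field K] {A j v : K} (hA : A ≠ 0) (hj : j ≠ 0)
    (hv : v ≠ 0) (u : K) (k : ℕ) :
    j ^ (-(2 * (k : ℤ))) * v ^ (-(2 * (k : ℤ))) * (u / v) ^ (-(k : ℤ))
      = A ^ k * (A * (j * u) * (j * v)) ^ (-(k : ℤ)) := by
  have h2k : -(2 * (k : ℤ)) = -((2 * k : ℕ) : ℤ) := by push_cast; ring
  simp only [h2k, zpow_neg, zpow_natCast, div_pow, inv_div, mul_pow]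
  rcases eq_or_ne u 0 with rfl | hu
  · cases k <;> simp
  · field_simp
    ring

lemma abs_floor_add_half_le (x : ℝ) : |(⌊x⌋ : ℝ) + 1 / 2| ≤ |x| + 1 / 2 := by
  have := Int.floor_le x
  have := Int.lt_floor_add_one x
  rw [abs_le]
  constructor <;> linarith [neg_abs_le x, le_abs_self x]

lemma intCast_add_half_ne_zero (m : ℤ) : (m : ℝ) + 1 / 2 ≠ 0 := by
  intro h
  have : ((2 * m + 1 : ℤ) : ℝ) = 0 := by push_cast; linarith
  have : 2 * m + 1 = 0 := by exact_mod_cast this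
  omega

lemma moebius_eq_coe_smul (g : SL(2, ℤ)) (z : ℍ) : moebius g z = ↑(g • z) := by
  rw [coe_specialLinearGroup_apply]
  simp [moebius]

lemma denomSL_eq_denom (g : SL(2, ℤ)) (z : ℍ) : denomSL g z = denom g z := by
  rw [denom_apply]
  simp [denomSL]

lemma finite_setOf_smul_eq_self (τ : ℍ) : {g : SL(2, ℤ) | g • τ = τ}.Finite :=
  (ProperlyDiscontinuousSMul.finite_stabilizer' 𝒮ℒ τ).preimage
    (MonoidHom.rangeRestrict_injective_iff.mpr Matrix.SpecialLinearGroup.mapGL_injective).injOn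

lemma eq_T_zpow_mul_of_row_one_eq {g g' : SL(2, ℤ)} (h : g 1 = g' 1) :
    g = T ^ (g 0 1 * g' 0 0 - g 0 0 * g' 0 1) * g' := by
  have h0 : g 1 0 = g' 1 0 := congrFun h 0
  have h1 : g 1 1 = g' 1 1 := congrFun h 1
  have hg := g.det_coe
  have hg' := g'.det_coe
  rw [Matrix.det_fin_two] at hg hg'
  rw [← h0, ← h1] at hg'
  ext i j
  fin_cases i <;> fin_cases j <;>
    simp only [Fin.zero_eta, Fin.mk_one, Fin.isValue, Matrix.SpecialLinearGroup.coe_mul, coe_T_zpow,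
      Matrix.mul_apply, Matrix.of_apply, Matrix.cons_val', Matrix.cons_val_fin_one,
      Matrix.cons_val_zero, Matrix.cons_val_one, Fin.sum_univ_two, one_mul, T_pow_mul_apply_one,
      ← h0, ← h1]
  · linear_combination g' 0 0 * hg - g 0 0 * hg'
  · linear_combination g' 0 1 * hg - g 0 1 * hg'

lemma injective_row_one_floor_re_smul (z : ℍ) (x₀ : ℝ) :
    Function.Injective fun g : SL(2, ℤ) => (g 1, ⌊(g • z).re - x₀⌋) := by
  intro g g' h
  obtain ⟨hrow, hfloor⟩ := Prod.mk.inj h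
  have hg := eq_T_zpow_mul_of_row_one_eq hrow
  set n := g 0 1 * g' 0 0 - g 0 0 * g' 0 1
  have hre : (g • z).re = (g' • z).re + n := by rw [hg, mul_smul, re_T_zpow_smul]
  rw [hre, add_sub_right_comm, Int.floor_add_intCast] at hfloor
  rw [hg, show n = 0 by omega, zpow_zero, one_mul]

lemma finite_setOf_lt_im_smul_and_abs_re_smul_sub_lt (z : ℍ) {y : ℝ} (hy : 0 < y) (x₀ R : ℝ) :
    {g : SL(2, ℤ) | y < (g • z).im ∧ |(g • z).re - x₀| < R}.Finite := by
  have hrows : {p : Fin 2 → ℤ | Complex.normSq (p 0 * z + p 1) < z.im / y}.Finite := by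
    simpa using Filter.eventually_cofinite.mp
      ((tendsto_normSq_coprime_pair z).eventually_ge_atTop (z.im / y))
  refine ((hrows.prod (Set.finite_Icc ⌊-R⌋ ⌊R⌋)).preimage
    (injective_row_one_floor_re_smul z x₀).injOn).subset ?_
  rintro g ⟨him, hre⟩
  rw [abs_lt] at hre
  refine ⟨?_, Int.floor_mono hre.1.le, Int.floor_mono hre.2.le⟩
  rw [ModularGroup.im_smul_eq_div_normSq, lt_div_iff₀ (normSq_denom_pos g z.im_ne_zero),
    denom_apply] at him
  show Complex.normSq (g 1 0 * z + g 1 1) < z.im / y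
  rw [lt_div_iff₀ hy]
  linarith

lemma formAct_mul (q : ℤ × ℤ × ℤ) (g h : SL(2, ℤ)) :
    formAct q (g * h) = formAct (formAct q g) h := by
  have e (i j : Fin 2) : (g * h).1 i j = g.1 i 0 * h.1 0 j + g.1 i 1 * h.1 1 j := by
    rw [Matrix.SpecialLinearGroup.coe_mul, Matrix.mul_apply, Fin.sum_univ_two]
  simp only [formAct, e]
  ext <;> ring

lemma formAct_one (q : ℤ × ℤ × ℤ) : formAct q 1 = q := by
  simp [formAct]

lemma formAct_eq_formAct_iff (q : ℤ × ℤ × ℤ) (g g' : SL(2, ℤ)) :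
    formAct q g = formAct q g' ↔ formAct q (g * g'⁻¹) = q := by
  constructor
  · intro h
    rw [formAct_mul, h, ← formAct_mul, mul_inv_cancel, formAct_one]
  · intro h
    rw [← inv_mul_cancel_right g g', formAct_mul, h]

lemma card_subtype_formAct_eq_formAct (q : ℤ × ℤ × ℤ) (g' : SL(2, ℤ)) :
    Nat.card {g : SL(2, ℤ) // formAct q g = formAct q g'}
      = Nat.card {g : SL(2, ℤ) // formAct q g = q} :=
  Nat.card_congr ((Equiv.mulRight g'⁻¹).subtypeEquiv fun g => formAct_eq_formAct_iff q g g')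

lemma disc_formAct (q : ℤ × ℤ × ℤ) (g : SL(2, ℤ)) :
    (formAct q g).2.1 ^ 2 - 4 * (formAct q g).1 * (formAct q g).2.2
      = q.2.1 ^ 2 - 4 * q.1 * q.2.2 := by
  have hg := g.det_coe
  rw [Matrix.det_fin_two] at hg
  simp only [formAct]
  linear_combination (q.2.1 ^ 2 - 4 * q.1 * q.2.2) * (g 0 0 * g 1 1 - g 0 1 * g 1 0 + 1) * hg

lemma formAct_fst_pos {a b c D : ℤ} (ha : 0 < a) (hD : 0 < D) (hdisc : b ^ 2 - 4 * a * c = -D)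
    (g : SL(2, ℤ)) : 0 < (formAct (a, b, c) g).1 := by
  have hg := g.det_coe
  rw [Matrix.det_fin_two] at hg
  have h4 : 4 * a * (formAct (a, b, c) g).1
      = (2 * a * g 0 0 + b * g 1 0) ^ 2 + D * g 1 0 ^ 2 := by
    simp only [formAct]
    linear_combination (-(g 1 0) ^ 2) * hdisc
  refine pos_of_mul_pos_right (h4 ▸ ?_ : 0 < 4 * a * _) (by positivity)
  rcases eq_or_ne (g 1 0) 0 with hc | hc
  · have hα : g 0 0 ≠ 0 := by rintro h; simp [h, hc] at hg
    have := sq_pos_of_ne_zero (mul_ne_zero (mul_ne_zero two_ne_zero ha.ne') hα)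
    simp only [hc]
    linarith
  · have := mul_pos hD (sq_pos_of_ne_zero hc)
    linarith [sq_nonneg (2 * a * g 0 0 + b * g 1 0)]

def formEval (q : ℤ × ℤ × ℤ) (w : ℂ) : ℂ := q.1 * w ^ 2 + q.2.1 * w + q.2.2

lemma formEval_apply (q : ℤ × ℤ × ℤ) (w : ℂ) :
    formEval q w = q.1 * w ^ 2 + q.2.1 * w + q.2.2 := rfl

lemma num_eq_coe_smul_mul_denom (g : SL(2, ℤ)) (z : ℍ) :
    (g 0 0 : ℂ) * z + g 0 1 = ↑(g • z) * denom g z := by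
  have hj := denom_ne_zero g z
  rw [denom_apply] at hj ⊢
  rw [coe_specialLinearGroup_apply]
  simp only [algebraMap_int_eq, eq_intCast, Complex.ofReal_intCast]
  rw [div_mul_cancel₀ _ hj]

lemma formEval_formAct (q : ℤ × ℤ × ℤ) (g : SL(2, ℤ)) (z : ℍ) :
    formEval (formAct q g) z = denom g z ^ 2 * formEval q ↑(g • z) := by
  have hu := num_eq_coe_smul_mul_denom g z
  rw [denom_apply] at hu ⊢
  simp only [formEval, formAct]
  push_cast
  linear_combination (q.1 * ((g 0 0 : ℂ) * z + g 0 1 + ↑(g • z) * (g 1 0 * z + g 1 1))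
    + q.2.1 * (g 1 0 * z + g 1 1)) * hu

def IsCMPoint (q : ℤ × ℤ × ℤ) (τ : ℍ) : Prop :=
  ∀ w : ℂ, formEval q w = q.1 * (w - τ) * (w - conj (τ : ℂ))

lemma isCMPoint_of_coe_eq {a b c D : ℤ} (ha : a ≠ 0) (hD : 0 ≤ D)
    (hdisc : b ^ 2 - 4 * a * c = -D) {τ : ℍ}
    (hτ : (τ : ℂ) = (-(b : ℂ) + (Real.sqrt D : ℂ) * Complex.I) / (2 * (a : ℂ))) :
    IsCMPoint (a, b, c) τ := by
  intro w
  have hs : ((Real.sqrt D : ℝ) : ℂ) ^ 2 = D := by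
    rw [← Complex.ofReal_pow, Real.sq_sqrt (by exact_mod_cast hD)]
    simp
  have hdC : (b : ℂ) ^ 2 - 4 * a * c = -D := by exact_mod_cast hdisc
  have ha' : (a : ℂ) ≠ 0 := by exact_mod_cast ha
  simp only [formEval, hτ, map_div₀, map_add, map_neg, map_mul, Complex.conj_ofReal,
    Complex.conj_I, map_intCast, map_ofNat]
  field_simp
  linear_combination (-(1 : ℂ)) * hs - hdC + ((Real.sqrt D : ℝ) : ℂ) ^ 2 * Complex.I_sq

lemma sub_conj_ne_zero (w τ : ℍ) : (w : ℂ) - conj (τ : ℂ) ≠ 0 := by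
  intro h
  have := congrArg Complex.im h
  simp only [Complex.sub_im, Complex.conj_im, sub_neg_eq_add, Complex.zero_im, coe_im] at this
  linarith [w.im_pos, τ.im_pos]

namespace IsCMPoint

variable {q : ℤ × ℤ × ℤ} {τ : ℍ}

lemma formEval_eq_zero (hQ : IsCMPoint q τ) : formEval q τ = 0 := by
  rw [hQ]
  ring

lemma formEval_formAct (hQ : IsCMPoint q τ) (g : SL(2, ℤ)) (z : ℍ) :
    formEval (formAct q g) z
      = q.1 * (denom g z * (↑(g • z) - τ)) * (denom g z * (↑(g • z) - conj (τ : ℂ))) := by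
  rw [_root_.formEval_formAct, hQ]
  ring

end IsCMPoint

lemma eq_zero_of_intCast_mul_add_eq_zero (τ : ℍ) {p q : ℤ} (h : (p : ℂ) * τ + q = 0) :
    p = 0 ∧ q = 0 := by
  have hp : p = 0 := by
    have := congrArg Complex.im h
    simp only [Complex.add_im, Complex.mul_im, Complex.intCast_re, Complex.intCast_im, coe_im,
      zero_mul, add_zero, Complex.zero_im] at this
    exact_mod_cast (mul_eq_zero.mp this).resolve_right τ.im_ne_zero
  subst hp
  exact ⟨rfl, by simpa using h⟩

lemma formAct_eq_self_iff {a b c D : ℤ} (ha : 0 < a) (hD : 0 < D)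
    (hdisc : b ^ 2 - 4 * a * c = -D) {τ : ℍ} (hQ : IsCMPoint (a, b, c) τ) (g : SL(2, ℤ)) :
    formAct (a, b, c) g = (a, b, c) ↔ g • τ = τ := by
  have hfactor := hQ.formEval_formAct g τ
  have hτ := hQ.formEval_eq_zero
  constructor
  · intro h
    rw [h, hτ] at hfactor
    have hsub : (↑(g • τ) : ℂ) - τ = 0 := by
      simpa [ha.ne', denom_ne_zero, sub_conj_ne_zero] using hfactor.symm
    exact UpperHalfPlane.ext (sub_eq_zero.mp hsub)
  -- `Q∘g` and `Q` both vanish at `τ`, so they are proportional; equal discriminants and positive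
  -- leading coefficients make the factor `1`.
  · intro h
    rw [h, sub_self, mul_zero, mul_zero, zero_mul] at hfactor
    have hpos := formAct_fst_pos ha hD hdisc g
    have hdisc' := (disc_formAct (a, b, c) g).trans hdisc
    generalize formAct (a, b, c) g = Q' at *
    obtain ⟨a', b', c'⟩ := Q'
    simp only [formEval] at hfactor hτ hpos hdisc' ⊢
    obtain ⟨hb, hc⟩ := eq_zero_of_intCast_mul_add_eq_zero τ (p := a' * b - a * b')
      (q := a' * c - a * c') (by push_cast; linear_combination (a' : ℂ) * hτ - (a : ℂ) * hfactor)
    have haa : (a' - a) * (a' + a) = 0 := by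
      apply mul_left_cancel₀ hD.ne'
      linear_combination a' ^ 2 * hdisc - a ^ 2 * hdisc' - (a * b' + a' * b) * hb
        + 4 * a * a' * hc
    have ha' : a' = a := by
      rcases mul_eq_zero.mp haa with h | h <;> linarith
    subst ha'
    have hb' : b' = b := mul_left_cancel₀ ha.ne' (by linarith)
    have hc' : c' = c := mul_left_cancel₀ ha.ne' (by linarith)
    rw [hb', hc']

lemma norm_sub_le_norm_sub_conj (w τ : ℍ) : ‖(w : ℂ) - τ‖ ≤ ‖(w : ℂ) - conj (τ : ℂ)‖ := by
  rw [← sq_le_sq₀ (norm_nonneg _) (norm_nonneg _), Complex.sq_norm, Complex.sq_norm,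
    Complex.normSq_apply, Complex.normSq_apply]
  simp only [Complex.sub_re, Complex.sub_im, Complex.conj_re, Complex.conj_im, coe_re, coe_im]
  nlinarith [w.im_pos, τ.im_pos]

lemma min_mul_abs_re_sub_add_half_le {w τ : ℍ} (h : w.im ≤ τ.im / 2 ∨ 1 ≤ |w.re - τ.re|) :
    min (τ.im / 2) (1 / 2) * (|w.re - τ.re| + 1 / 2) ≤ ‖(w : ℂ) - τ‖ := by
  have hre : |w.re - τ.re| ≤ ‖(w : ℂ) - τ‖ := by
    simpa using Complex.abs_re_le_norm ((w : ℂ) - τ)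
  have him : |w.im - τ.im| ≤ ‖(w : ℂ) - τ‖ := by
    simpa using Complex.abs_im_le_norm ((w : ℂ) - τ)
  have hε : min (τ.im / 2) (1 / 2) * |w.re - τ.re| ≤ 1 / 2 * |w.re - τ.re| :=
    mul_le_mul_of_nonneg_right (min_le_right _ _) (abs_nonneg _)
  rcases h with h | h
  · have := min_le_left (τ.im / 2) (1 / 2)
    have := neg_abs_le (w.im - τ.im)
    linarith
  · have := min_le_right (τ.im / 2) (1 / 2)
    linarith

lemma inv_norm_formEval_formAct_pow_le {q : ℤ × ℤ × ℤ} {τ : ℍ} (hq : 0 < q.1)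
    (hQ : IsCMPoint q τ) (k : ℕ) (g : SL(2, ℤ)) (z : ℍ)
    (hg : (g • z).im ≤ τ.im / 2 ∨ 1 ≤ |(g • z).re - τ.re|) :
    (‖formEval (formAct q g) z‖ ^ k)⁻¹ ≤ ((q.1 * min (τ.im / 2) (1 / 2) ^ 2) ^ k)⁻¹ *
      ((‖denom g z‖ ^ (2 * k))⁻¹ * (|(⌊(g • z).re - τ.re⌋ : ℝ) + 1 / 2| ^ (2 * k))⁻¹) := by
  set ε := min (τ.im / 2) (1 / 2)
  set m : ℝ := ((⌊(g • z).re - τ.re⌋ : ℤ) : ℝ)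
  have hε : 0 < ε := lt_min (by linarith [τ.im_pos]) (by norm_num)
  have hm : 0 < |m + 1 / 2| := abs_pos.mpr (intCast_add_half_ne_zero _)
  have hj : 0 < ‖denom g z‖ := norm_pos_iff.mpr (denom_ne_zero g z)
  have hq' : (0 : ℝ) < q.1 := by exact_mod_cast hq
  have hlow : (q.1 * ε ^ 2) * (‖denom g z‖ ^ 2 * |m + 1 / 2| ^ 2)
      ≤ ‖formEval (formAct q g) z‖ := by
    have h1 : ε * |m + 1 / 2| ≤ ‖(↑(g • z) : ℂ) - τ‖ :=
      (mul_le_mul_of_nonneg_left (abs_floor_add_half_le _) hε.le).trans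
        (min_mul_abs_re_sub_add_half_le hg)
    have h2 := norm_sub_le_norm_sub_conj (g • z) τ
    rw [hQ.formEval_formAct, norm_mul, norm_mul, norm_mul, norm_mul, Complex.norm_intCast,
      abs_of_pos hq']
    calc _ = (q.1 : ℝ) * (‖denom g z‖ * (ε * |m + 1 / 2|)) * (‖denom g z‖ * (ε * |m + 1 / 2|)) := by
          ring
      _ ≤ _ := by gcongr; exact h1.trans h2
  calc (‖formEval (formAct q g) z‖ ^ k)⁻¹
      ≤ (((q.1 * ε ^ 2) * (‖denom g z‖ ^ 2 * |m + 1 / 2| ^ 2)) ^ k)⁻¹ := by gcongr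
    _ = _ := by simp only [mul_pow, mul_inv, ← pow_mul]

lemma summable_inv_norm_linear_pow_mul_inv_abs_add_half_pow {k : ℕ} (hk : 2 ≤ k) (z : ℍ) :
    Summable fun p : (Fin 2 → ℤ) × ℤ =>
      (‖(p.1 0 : ℂ) * z + p.1 1‖ ^ (2 * k))⁻¹ * (|(p.2 : ℝ) + 1 / 2| ^ (2 * k))⁻¹ := by
  have hrows := EisensteinSeries.summable_norm_eisSummand (k := ((2 * k : ℕ) : ℤ)) (by omega) z
  have hcols := (Real.summable_one_div_int_add_rpow (1 / 2) ((2 * k : ℕ) : ℝ)).mpr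
    (by norm_cast; omega)
  have h1 (v : Fin 2 → ℤ) : ‖EisensteinSeries.eisSummand ((2 * k : ℕ) : ℤ) v z‖
      = (‖(v 0 : ℂ) * z + v 1‖ ^ (2 * k))⁻¹ := by
    rw [EisensteinSeries.eisSummand, norm_zpow, zpow_neg, zpow_natCast]
  have h2 (m : ℤ) :
      1 / |(m : ℝ) + 1 / 2| ^ ((2 * k : ℕ) : ℝ) = (|(m : ℝ) + 1 / 2| ^ (2 * k))⁻¹ := by
    rw [one_div, Real.rpow_natCast]
  exact Summable.mul_of_nonneg (hrows.congr h1) (hcols.congr h2)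
    (fun _ => by positivity) (fun _ => by positivity)

lemma summable_norm_formEval_formAct_zpow {q : ℤ × ℤ × ℤ} {τ : ℍ} (hq : 0 < q.1)
    (hQ : IsCMPoint q τ) {k : ℕ} (hk : 2 ≤ k) (z : ℍ) :
    Summable fun g : SL(2, ℤ) => ‖formEval (formAct q g) z ^ (-(k : ℤ))‖ := by
  refine Summable.of_norm_bounded_eventually
    (((summable_inv_norm_linear_pow_mul_inv_abs_add_half_pow hk z).comp_injective
      (injective_row_one_floor_re_smul z τ.re)).mul_left
        ((q.1 * min (τ.im / 2) (1 / 2) ^ 2) ^ k)⁻¹) ?_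
  rw [Filter.eventually_cofinite]
  refine (finite_setOf_lt_im_smul_and_abs_re_smul_sub_lt z (half_pos τ.im_pos) τ.re 1).subset
    fun g hg => ?_
  by_contra hgood
  rw [Set.mem_ofPred_eq, not_and_or, not_lt, not_lt] at hgood
  apply hg
  rw [norm_norm, norm_zpow, zpow_neg, zpow_natCast]
  convert inv_norm_formEval_formAct_pow_le hq hQ k g z hgood using 4
  rw [denom_apply]
  rfl

lemma IsCMPoint.poincare_summand_eq {q : ℤ × ℤ × ℤ} {τ : ℍ} (hQ : IsCMPoint q τ) (hq : q.1 ≠ 0)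
    (k : ℕ) (g : SL(2, ℤ)) (z : ℍ) :
    denom g z ^ (-(2 * (k : ℤ))) * (↑(g • z) - conj (τ : ℂ)) ^ (-(2 * (k : ℤ)))
        * ((↑(g • z) - τ) / (↑(g • z) - conj (τ : ℂ))) ^ (-(k : ℤ))
      = (q.1 : ℂ) ^ k * formEval (formAct q g) z ^ (-(k : ℤ)) := by
  rw [hQ.formEval_formAct]
  exact zpow_mul_zpow_mul_div_zpow_eq (by exact_mod_cast hq) (denom_ne_zero g z)
    (sub_conj_ne_zero (g • z) τ) _ k

def toFormOrbit (q : ℤ × ℤ × ℤ) (g : SL(2, ℤ)) : {q' // ∃ g, q' = formAct q g} :=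
  ⟨formAct q g, g, rfl⟩

lemma toFormOrbit_surjective (q : ℤ × ℤ × ℤ) : Function.Surjective (toFormOrbit q) :=
  fun q' => let ⟨g, hg⟩ := q'.2; ⟨g, Subtype.ext hg.symm⟩

lemma card_fiber_toFormOrbit {a b c D : ℤ} (ha : 0 < a) (hD : 0 < D)
    (hdisc : b ^ 2 - 4 * a * c = -D) {τ : ℍ} (hQ : IsCMPoint (a, b, c) τ)
    (q : {q // ∃ g, q = formAct (a, b, c) g}) :
    Nat.card {g // toFormOrbit (a, b, c) g = q} = Nat.card {g : SL(2, ℤ) // g • τ = τ} := by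
  obtain ⟨g', rfl⟩ := toFormOrbit_surjective _ q
  calc Nat.card {g // toFormOrbit (a, b, c) g = toFormOrbit (a, b, c) g'}
      = Nat.card {g // formAct (a, b, c) g = formAct (a, b, c) g'} :=
        Nat.card_congr (Equiv.subtypeEquivRight fun g => Subtype.ext_iff)
    _ = Nat.card {g // formAct (a, b, c) g = (a, b, c)} := card_subtype_formAct_eq_formAct _ _
    _ = _ := Nat.card_congr (Equiv.subtypeEquivRight (formAct_eq_self_iff ha hD hdisc hQ))

lemma card_stabilizer_ne_zero (τ : ℍ) : Nat.card {g : SL(2, ℤ) // g • τ = τ} ≠ 0 := by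
  have : Finite {g : SL(2, ℤ) // g • τ = τ} := (finite_setOf_smul_eq_self τ).to_subtype
  have : Nonempty {g : SL(2, ℤ) // g • τ = τ} := ⟨⟨1, one_smul _ τ⟩⟩
  exact Nat.card_pos.ne'

lemma tsum_formAct_eq_card_mul_tsum {a b c D : ℤ} (ha : 0 < a) (hD : 0 < D)
    (hdisc : b ^ 2 - 4 * a * c = -D) {τ : ℍ} (hQ : IsCMPoint (a, b, c) τ)
    {v : ℤ × ℤ × ℤ → ℂ} (hv : Summable fun g => ‖v (formAct (a, b, c) g)‖) :
    ∑' g, v (formAct (a, b, c) g)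
      = Nat.card {g : SL(2, ℤ) // g • τ = τ} * ∑' q : {q // ∃ g, q = formAct (a, b, c) g}, v q :=
  tsum_comp_eq_card_mul_tsum (toFormOrbit (a, b, c)) (card_fiber_toFormOrbit ha hD hdisc hQ)
    (v := fun q => v q.1) hv.of_norm

theorem stmt_17_general (k : ℕ) (hk : 2 ≤ k) (a b c D : ℤ) (hD : 0 < D) (ha : 0 < a)
    (hdisc : b ^ 2 - 4 * a * c = -D)
    (τ : UpperHalfPlane)
    (hτ : (τ : ℂ) = (-(b : ℂ) + (Real.sqrt D : ℂ) * Complex.I) / (2 * (a : ℂ)))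
    (vQ : ℝ) (hvQ : vQ = Real.sqrt D / (2 * a))
    (ω : ℝ)
    (hω : ω = (Nat.card {g : Matrix.SpecialLinearGroup (Fin 2) ℤ //
        moebius g (τ : ℂ) = (τ : ℂ)} : ℝ) / 2)
    (z : UpperHalfPlane) :
    Summable (fun q : {q : ℤ × ℤ × ℤ //
          ∃ g : Matrix.SpecialLinearGroup (Fin 2) ℤ, q = formAct (a, b, c) g} =>
        ‖(((q.1.1 : ℂ) * (z : ℂ) ^ 2 + (q.1.2.1 : ℂ) * (z : ℂ)
            + (q.1.2.2 : ℂ)) ^ (-(k : ℤ)))‖)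
    ∧ Summable (fun g : Matrix.SpecialLinearGroup (Fin 2) ℤ =>
        ‖(denomSL g (z : ℂ) ^ (-(2 * (k : ℤ)))
          * (moebius g (z : ℂ) - (starRingEnd ℂ) (τ : ℂ)) ^ (-(2 * (k : ℤ)))
          * ((moebius g (z : ℂ) - (τ : ℂ))
              / (moebius g (z : ℂ) - (starRingEnd ℂ) (τ : ℂ))) ^ (-(k : ℤ)))‖)
    ∧ ((Real.sqrt D ^ k : ℝ) : ℂ)
          * ∑' q : {q : ℤ × ℤ × ℤ //
              ∃ g : Matrix.SpecialLinearGroup (Fin 2) ℤ, q = formAct (a, b, c) g},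
            ((q.1.1 : ℂ) * (z : ℂ) ^ 2 + (q.1.2.1 : ℂ) * (z : ℂ) + (q.1.2.2 : ℂ)) ^ (-(k : ℤ))
        = (((2 * vQ) ^ k / (2 * ω) : ℝ) : ℂ)
            * ∑' g : Matrix.SpecialLinearGroup (Fin 2) ℤ,
              denomSL g (z : ℂ) ^ (-(2 * (k : ℤ)))
                * (moebius g (z : ℂ) - (starRingEnd ℂ) (τ : ℂ)) ^ (-(2 * (k : ℤ)))
                * ((moebius g (z : ℂ) - (τ : ℂ))
                    / (moebius g (z : ℂ) - (starRingEnd ℂ) (τ : ℂ))) ^ (-(k : ℤ)) := by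
  have hQ := isCMPoint_of_coe_eq ha.ne' hD.le hdisc hτ
  have hsum := summable_norm_formEval_formAct_zpow ha hQ hk z
  simp only [moebius_eq_coe_smul, denomSL_eq_denom, hQ.poincare_summand_eq ha.ne',
    UpperHalfPlane.coe_inj] at hω ⊢
  simp only [← formEval_apply]
  have hcoef : (2 * vQ) ^ k / (2 * ω) * (a ^ k * Nat.card {g : SL(2, ℤ) // g • τ = τ})
      = √D ^ k := by
    have ha' : (a : ℝ) ≠ 0 := by exact_mod_cast ha.ne'
    have hN := card_stabilizer_ne_zero τ
    rw [hvQ, hω]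
    field_simp
    rw [div_pow, div_mul_cancel₀ _ (pow_ne_zero k ha')]
  refine ⟨Summable.of_comp_surjective (toFormOrbit_surjective (a, b, c))
    (f := fun q => ‖formEval q.1 z ^ (-(k : ℤ))‖) hsum, ?_, ?_⟩
  · simpa only [norm_mul, norm_pow, Complex.norm_intCast, abs_of_pos (Int.cast_pos.mpr ha)]
      using hsum.mul_left ((a : ℝ) ^ k)
  · rw [tsum_mul_left, tsum_formAct_eq_card_mul_tsum ha hD hdisc hQ
      (v := fun q => formEval q z ^ (-(k : ℤ))) hsum, ← hcoef]
    push_cast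
    ring

/-- Let `k ≥ 2`, let `Q = [a,b,c]` be positive definite of discriminant `−D`
with CM-point `τ_Q` and `v_Q = √D/(2a)`, let `O(Q)` be the `SL₂(ℤ)`-orbit of `Q` and
`ω = (1/2)#{M : M·τ_Q = τ_Q}`. Then for every `z` in the upper half-plane not in the
`SL₂(ℤ)`-orbit of `τ_Q`, both series below converge absolutely and
`D^{k/2} ∑_{𝒬 ∈ O(Q)} 𝒬(z,1)^{−k}
  = ((2v_Q)^k/(2ω)) ∑_{M ∈ SL₂(ℤ)} (γz+δ)^{−2k}(M·z − conj τ_Q)^{−2k} X_{τ_Q}(M·z)^{−k}`. -/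
theorem stmt_17 (k : ℕ) (hk : 2 ≤ k) (a b c D : ℤ) (hD : 0 < D) (ha : 0 < a)
    (hdisc : b ^ 2 - 4 * a * c = -D)
    (τ : UpperHalfPlane)
    (hτ : (τ : ℂ) = (-(b : ℂ) + (Real.sqrt D : ℂ) * Complex.I) / (2 * (a : ℂ)))
    (vQ : ℝ) (hvQ : vQ = Real.sqrt D / (2 * a))
    (ω : ℝ)
    (hω : ω = (Nat.card {g : Matrix.SpecialLinearGroup (Fin 2) ℤ //
        moebius g (τ : ℂ) = (τ : ℂ)} : ℝ) / 2)
    (z : UpperHalfPlane)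
    (hz : ∀ g : Matrix.SpecialLinearGroup (Fin 2) ℤ, moebius g (z : ℂ) ≠ (τ : ℂ)) :
    Summable (fun q : {q : ℤ × ℤ × ℤ //
          ∃ g : Matrix.SpecialLinearGroup (Fin 2) ℤ, q = formAct (a, b, c) g} =>
        ‖(((q.1.1 : ℂ) * (z : ℂ) ^ 2 + (q.1.2.1 : ℂ) * (z : ℂ)
            + (q.1.2.2 : ℂ)) ^ (-(k : ℤ)))‖)
    ∧ Summable (fun g : Matrix.SpecialLinearGroup (Fin 2) ℤ =>
        ‖(denomSL g (z : ℂ) ^ (-(2 * (k : ℤ)))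
          * (moebius g (z : ℂ) - (starRingEnd ℂ) (τ : ℂ)) ^ (-(2 * (k : ℤ)))
          * ((moebius g (z : ℂ) - (τ : ℂ))
              / (moebius g (z : ℂ) - (starRingEnd ℂ) (τ : ℂ))) ^ (-(k : ℤ)))‖)
    ∧ ((Real.sqrt D ^ k : ℝ) : ℂ)
          * ∑' q : {q : ℤ × ℤ × ℤ //
              ∃ g : Matrix.SpecialLinearGroup (Fin 2) ℤ, q = formAct (a, b, c) g},
            ((q.1.1 : ℂ) * (z : ℂ) ^ 2 + (q.1.2.1 : ℂ) * (z : ℂ) + (q.1.2.2 : ℂ)) ^ (-(k : ℤ))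
        = (((2 * vQ) ^ k / (2 * ω) : ℝ) : ℂ)
            * ∑' g : Matrix.SpecialLinearGroup (Fin 2) ℤ,
              denomSL g (z : ℂ) ^ (-(2 * (k : ℤ)))
                * (moebius g (z : ℂ) - (starRingEnd ℂ) (τ : ℂ)) ^ (-(2 * (k : ℤ)))
                * ((moebius g (z : ℂ) - (τ : ℂ))
                    / (moebius g (z : ℂ) - (starRingEnd ℂ) (τ : ℂ))) ^ (-(k : ℤ)) :=
  stmt_17_general k hk a b c D hD ha hdisc τ hτ vQ hvQ ω hω z
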